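/- arXiv:math/0402249 — 7 statements merged into one kernel-verified Lean document; each statement's English description precedes it below -/
import Mathlib

section
/- If θ : L → L' is a loop homomorphism, then the map θ₊ : Mlt_ℓ(L) → Mlt_ℓ(θ(L)) defined by θ₊(α)(θ(x)) = θ(α(x)) for all x ∈ L is a well-defined group epimorphism from the left multiplication group of L onto the left multiplication group of the image loop θ(L). -/
/-- A loop: a binary operation with two-sided identity whose left and right
translations are bijections. -/
structure LoopStr (L : Type*) where
  mul : L → L → L
  one : L
  one_mul : ∀ x, mul one x = x
  mul_one : ∀ x, mul x one = x
  mul_left_bij : ∀ x, Function.Bijective (mul x)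
  mul_right_bij : ∀ x, Function.Bijective fun y => mul y x

/-- Left translation `λ_x` as a permutation. -/
noncomputable def LoopStr.lam {L : Type*} (S : LoopStr L) (x : L) : Equiv.Perm L :=
  Equiv.ofBijective _ (S.mul_left_bij x)

/-- Right translation `ρ_x` as a permutation. -/
noncomputable def LoopStr.rho {L : Type*} (S : LoopStr L) (x : L) : Equiv.Perm L :=
  Equiv.ofBijective _ (S.mul_right_bij x)

/-- The left multiplication group `Mlt_ℓ(L)`. -/
noncomputable def LoopStr.Mlt {L : Type*} (S : LoopStr L) : Subgroup (Equiv.Perm L) :=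
  Subgroup.closure (Set.range S.lam)

/-- Left division: `ldiv a b` is the unique solution `x` of `a·x = b`. -/
noncomputable def LoopStr.ldiv {L : Type*} (S : LoopStr L) (a b : L) : L := (S.lam a).symm b

/-- Right division: `rdiv a b` is the unique solution `x` of `x·b = a`. -/
noncomputable def LoopStr.rdiv {L : Type*} (S : LoopStr L) (a b : L) : L := (S.rho b).symm a

/-- The inner mapping `δ_{x,y} = λ_{xy}⁻¹ ∘ λ_x ∘ λ_y`. -/
noncomputable def LoopStr.delta {L : Type*} (S : LoopStr L) (x y : L) : Equiv.Perm L :=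
  (S.lam (S.mul x y))⁻¹ * S.lam x * S.lam y

/-- A loop homomorphism: preserves the multiplication and the identity. -/
def IsLoopHom {L L' : Type*} (S : LoopStr L) (S' : LoopStr L') (θ : L → L') : Prop :=
  θ S.one = S'.one ∧ ∀ x y, θ (S.mul x y) = S'.mul (θ x) (θ y)

/-- A subloop: a subset containing the identity, closed under multiplication
and both divisions. -/
def IsSubloop {L : Type*} (S : LoopStr L) (N : Set L) : Prop :=
  S.one ∈ N ∧ (∀ a ∈ N, ∀ b ∈ N, S.mul a b ∈ N) ∧
    (∀ a ∈ N, ∀ b ∈ N, S.ldiv a b ∈ N) ∧ (∀ a ∈ N, ∀ b ∈ N, S.rdiv a b ∈ N)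

/-- A normal subloop: `ab·N = a·(bN) = (aN)·b` for all `a, b`. -/
def IsNormalSubloop {L : Type*} (S : LoopStr L) (N : Set L) : Prop :=
  IsSubloop S N ∧ ∀ a b : L,
    ((fun n => S.mul (S.mul a b) n) '' N = (fun n => S.mul a (S.mul b n)) '' N) ∧
    ((fun n => S.mul (S.mul a b) n) '' N = (fun n => S.mul (S.mul a n) b) '' N)

/-! If `θ` is onto, a permutation `α` of `L` admits at most one permutation `β` of `L'` with
`θ ∘ α = β ∘ θ`; the `α` admitting one form a subgroup on which `α ↦ β` is a homomorphism. Every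
`λ_x` is such an `α`, with `β = λ_{θ x}`, so `Mlt_ℓ(L)` lies in that subgroup and its image is
generated by the `λ_{θ x}`, which exhaust the generators of `Mlt_ℓ(L')`. -/

open Function Equiv

section SemiconjPerms

variable {L L' : Type*}

def semiconjPerms (θ : L → L') : Subgroup (Perm L) where
  carrier := {α | ∃ β : Perm L', Semiconj θ α β}
  mul_mem' := fun ⟨βa, ha⟩ ⟨βb, hb⟩ => ⟨βa * βb, ha.comp_right hb⟩
  one_mem' := ⟨1, Semiconj.id_right⟩
  inv_mem' := fun {α} ⟨β, h⟩ =>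
    ⟨β⁻¹, h.inverses_right α.rightInverse_symm β.leftInverse_symm⟩

theorem Function.Surjective.perm_eq_of_semiconj {θ : L → L'} (hθ : Surjective θ)
    {α : Perm L} {β₁ β₂ : Perm L'} (h₁ : Semiconj θ α β₁) (h₂ : Semiconj θ α β₂) :
    β₁ = β₂ :=
  Perm.ext <| hθ.forall.2 fun x => (h₁ x).symm.trans (h₂ x)

noncomputable def semiconjPermsHom {θ : L → L'} (hθ : Surjective θ) :
    semiconjPerms θ →* Perm L' where
  toFun α := α.2.choose
  map_one' := hθ.perm_eq_of_semiconj (semiconjPerms θ).one_mem.choose_spec Semiconj.id_right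
  map_mul' α β := hθ.perm_eq_of_semiconj (α * β).2.choose_spec
    (α.2.choose_spec.comp_right β.2.choose_spec)

theorem semiconj_semiconjPermsHom {θ : L → L'} (hθ : Surjective θ) (α : semiconjPerms θ) :
    Semiconj θ α (semiconjPermsHom hθ α) :=
  α.2.choose_spec

end SemiconjPerms

namespace IsLoopHom

variable {L L' : Type*} {S : LoopStr L} {S' : LoopStr L'} {θ : L → L'}

theorem semiconj_lam (hθ : IsLoopHom S S' θ) (x : L) : Semiconj θ (S.lam x) (S'.lam (θ x)) :=
  hθ.2 x

theorem Mlt_le_semiconjPerms (hθ : IsLoopHom S S' θ) : S.Mlt ≤ semiconjPerms θ :=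
  (Subgroup.closure_le _).2 <| Set.range_subset_iff.2 fun x => ⟨_, hθ.semiconj_lam x⟩

/-- The paper's `θ₊`, with codomain enlarged to `Sym(L')`. -/
noncomputable def pushMlt (hθ : IsLoopHom S S' θ) (hsurj : Surjective θ) : S.Mlt →* Perm L' :=
  (semiconjPermsHom hsurj).comp (Subgroup.inclusion hθ.Mlt_le_semiconjPerms)

theorem pushMlt_apply_apply (hθ : IsLoopHom S S' θ) (hsurj : Surjective θ) (α : S.Mlt) (x : L) :
    hθ.pushMlt hsurj α (θ x) = θ ((α : Perm L) x) :=
  (semiconj_semiconjPermsHom hsurj _ x).symm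

theorem pushMlt_lam (hθ : IsLoopHom S S' θ) (hsurj : Surjective θ) (x : L) :
    hθ.pushMlt hsurj ⟨S.lam x, Subgroup.subset_closure ⟨x, rfl⟩⟩ = S'.lam (θ x) :=
  hsurj.perm_eq_of_semiconj (semiconj_semiconjPermsHom hsurj _) (hθ.semiconj_lam x)

theorem range_pushMlt (hθ : IsLoopHom S S' θ) (hsurj : Surjective θ) :
    (hθ.pushMlt hsurj).range = S'.Mlt := by
  have hgen : (⊤ : Subgroup S.Mlt) = Subgroup.closure ((↑) ⁻¹' Set.range S.lam) :=
    Subgroup.closure_closure_coe_preimage.symm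
  rw [MonoidHom.range_eq_map, hgen, MonoidHom.map_closure]
  congr 1
  ext β
  constructor
  · rintro ⟨⟨_, _⟩, ⟨x, rfl⟩, rfl⟩
    exact ⟨θ x, (hθ.pushMlt_lam hsurj x).symm⟩
  · rintro ⟨y, rfl⟩
    obtain ⟨x, rfl⟩ := hsurj y
    exact ⟨_, ⟨x, rfl⟩, hθ.pushMlt_lam hsurj x⟩

end IsLoopHom

/-- If `θ : L → L'` is a loop homomorphism (here with image
loop `L' = θ(L)`, i.e. `θ` surjective), then `θ₊ : Mlt_ℓ(L) → Mlt_ℓ(θ(L))`,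
determined by `θ₊(α)(θ x) = θ(α x)`, is a well-defined group epimorphism. -/
theorem stmt0 {L L' : Type*} (S : LoopStr L) (S' : LoopStr L') (θ : L → L')
    (hθ : IsLoopHom S S' θ) (hsurj : Function.Surjective θ) :
    ∃ Φ : ↥S.Mlt →* ↥S'.Mlt, Function.Surjective Φ ∧
      ∀ (α : ↥S.Mlt) (x : L),
        ((Φ α : Equiv.Perm L') (θ x)) = θ ((α : Equiv.Perm L) x) := by
  have hrange := hθ.range_pushMlt hsurj
  refine ⟨(hθ.pushMlt hsurj).codRestrict S'.Mlt fun α => hrange ▸ ⟨α, rfl⟩, ?_,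
    hθ.pushMlt_apply_apply hsurj⟩
  rintro ⟨β, hβ⟩
  obtain ⟨α, rfl⟩ := hrange ▸ hβ
  exact ⟨α, rfl⟩
end

section
/- If θ : L → L' is a loop homomorphism, then the kernel of the induced epimorphism θ₊ : Mlt_ℓ(L) → Mlt_ℓ(θ(L)) equals 𝓛(ker θ) := { α ∈ Mlt_ℓ(L) : α(x) ∈ (ker θ)·x for all x ∈ L }, where ker θ = θ⁻¹(1). -/
/-- The kernel of the induced epimorphism
`θ₊ : Mlt_ℓ(L) → Mlt_ℓ(θ(L))` equals
`𝓛(ker θ) = { α ∈ Mlt_ℓ(L) : α(x) ∈ (ker θ)·x for all x }`. -/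
theorem stmt1 {L L' : Type*} (S : LoopStr L) (S' : LoopStr L') (θ : L → L')
    (hθ : IsLoopHom S S' θ) (hsurj : Function.Surjective θ)
    (Φ : ↥S.Mlt →* ↥S'.Mlt)
    (hΦ : ∀ (α : ↥S.Mlt) (x : L),
      ((Φ α : Equiv.Perm L') (θ x)) = θ ((α : Equiv.Perm L) x)) :
    ∀ α : ↥S.Mlt, α ∈ Φ.ker ↔
      ∀ x : L, ∃ n : L, θ n = S'.one ∧ (α : Equiv.Perm L) x = S.mul n x := by
  intro α
  constructor
  · intro h x
    have hfix : θ ((α : Equiv.Perm L) x) = θ x := by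
      rw [← hΦ α x, h]; rfl
    refine ⟨S.rdiv ((α : Equiv.Perm L) x) x, ?_, ?_⟩
    · have hx : S.mul (S.rdiv ((α : Equiv.Perm L) x) x) x = (α : Equiv.Perm L) x :=
        (S.rho x).apply_symm_apply _
      have := congrArg θ hx
      rw [hθ.2] at this
      have h1 : S'.mul (θ (S.rdiv ((α : Equiv.Perm L) x) x)) (θ x)
          = S'.mul S'.one (θ x) := by rw [this, hfix, S'.one_mul]
      exact (S'.mul_right_bij (θ x)).1 h1
    · exact ((S.rho x).apply_symm_apply _).symm
  · intro h
    have hfix : ∀ x, θ ((α : Equiv.Perm L) x) = θ x := by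
      intro x
      obtain ⟨n, hn, he⟩ := h x
      rw [he, hθ.2, hn, S'.one_mul]
    ext y
    obtain ⟨x, rfl⟩ := hsurj y
    show ((Φ α : Equiv.Perm L') (θ x)) = θ x
    rw [hΦ α x, hfix]
end

section
/- If N is a normal subloop of a loop L, then 𝓛(N) := { α ∈ Mlt_ℓ(L) : α(x) ∈ N·x for all x ∈ L } is a normal subgroup of the left multiplication group Mlt_ℓ(L). -/
/-! Normality of `N` makes `x ~ y ↔ x ∈ N·y` an equivalence relation whose classes are the
cosets `N·x`, and each left translation `λ_a` maps `N·x` onto `N·(ax)`. So `Mlt_ℓ(L)` permutes the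
cosets, and `𝓛(N)`, the set of its elements fixing every coset, is the kernel of that action. -/

namespace Setoid

variable {α : Type*} (r : Setoid α)

def classwisePerm : Subgroup (Equiv.Perm α) where
  carrier := {σ | ∀ x, r (σ x) x}
  one_mem' _ := r.refl _
  mul_mem' {σ τ} hσ hτ x := r.trans (hσ (τ x)) (hτ x)
  inv_mem' {σ} hσ x := by simpa using r.symm (hσ (σ⁻¹ x))

def autPerm : Subgroup (Equiv.Perm α) where
  carrier := {σ | ∀ x y, r (σ x) (σ y) ↔ r x y}
  one_mem' _ _ := Iff.rfl
  mul_mem' {σ τ} hσ hτ x y := (hσ (τ x) (τ y)).trans (hτ x y)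
  inv_mem' {σ} hσ x y := by simpa using (hσ (σ⁻¹ x) (σ⁻¹ y)).symm

theorem autPerm_le_normalizer_classwisePerm :
    r.autPerm ≤ Subgroup.normalizer (classwisePerm r : Set (Equiv.Perm α)) := by
  intro g hg
  refine Subgroup.mem_normalizer_iff.mpr fun σ ↦ ?_
  change (∀ x, r (σ x) x) ↔ ∀ x, r (g (σ (g⁻¹ x))) x
  calc (∀ x, r (σ x) x) ↔ ∀ x, r (g (σ x)) (g x) := forall_congr' fun x ↦ (hg _ _).symm
    _ ↔ ∀ x, r (g (σ (g⁻¹ x))) x := g.forall_congr_left.trans (by simp [Equiv.Perm.inv_def])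

end Setoid

namespace LoopStr

variable {L : Type*} {S : LoopStr L} {N : Set L}

def rcoset (S : LoopStr L) (N : Set L) (x : L) : Set L := (fun n ↦ S.mul n x) '' N

theorem mem_rcoset_self (h : S.one ∈ N) (x : L) : x ∈ S.rcoset N x :=
  ⟨S.one, h, S.one_mul x⟩

theorem _root_.IsSubloop.image_mul_left_eq_self (hN : IsSubloop S N) {n : L} (hn : n ∈ N) :
    S.mul n '' N = N := by
  refine (Set.image_subset_iff.mpr fun m hm ↦ hN.2.1 n hn m hm).antisymm fun m hm ↦ ?_
  exact ⟨S.ldiv n m, hN.2.2.1 n hn m hm, (S.lam n).apply_symm_apply m⟩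

end LoopStr

namespace IsNormalSubloop

open LoopStr

variable {L : Type*} {S : LoopStr L} {N : Set L}

theorem image_mul_left_eq_rcoset (hN : IsNormalSubloop S N) (a : L) :
    S.mul a '' N = S.rcoset N a := by
  have h := (hN.2 S.one a).2
  simp only [S.one_mul] at h
  exact h

theorem rcoset_eq_of_mem (hN : IsNormalSubloop S N) {x y : L} (h : x ∈ S.rcoset N y) :
    S.rcoset N x = S.rcoset N y := by
  obtain ⟨n, hn, rfl⟩ := h
  calc S.rcoset N (S.mul n y) = (fun m ↦ S.mul (S.mul n y) m) '' N :=
        (hN.image_mul_left_eq_rcoset _).symm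
    _ = (fun m ↦ S.mul (S.mul n m) y) '' N := (hN.2 n y).2
    _ = (fun z ↦ S.mul z y) '' (S.mul n '' N) := by rw [← Set.image_comp]; rfl
    _ = S.rcoset N y := by rw [hN.1.image_mul_left_eq_self hn]; rfl

theorem lam_image_rcoset (hN : IsNormalSubloop S N) (a x : L) :
    S.lam a '' S.rcoset N x = S.rcoset N (S.mul a x) :=
  calc S.lam a '' S.rcoset N x = (fun n ↦ S.mul a (S.mul x n)) '' N := by
        rw [← hN.image_mul_left_eq_rcoset, ← Set.image_comp]; rfl
    _ = (fun n ↦ S.mul (S.mul a x) n) '' N := (hN.2 a x).1.symm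
    _ = S.rcoset N (S.mul a x) := hN.image_mul_left_eq_rcoset _

def rcosetSetoid (hN : IsNormalSubloop S N) : Setoid L where
  r x y := x ∈ S.rcoset N y
  iseqv :=
    { refl := mem_rcoset_self hN.1.1
      symm := fun h ↦ hN.rcoset_eq_of_mem h ▸ mem_rcoset_self hN.1.1 _
      trans := fun hxy hyz ↦ hN.rcoset_eq_of_mem hyz ▸ hxy }

theorem mlt_le_autPerm (hN : IsNormalSubloop S N) : S.Mlt ≤ hN.rcosetSetoid.autPerm := by
  refine (Subgroup.closure_le _).mpr ?_
  rintro _ ⟨a, rfl⟩ x y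
  change S.lam a x ∈ S.rcoset N (S.mul a y) ↔ x ∈ S.rcoset N y
  rw [← hN.lam_image_rcoset]
  exact (S.lam a).injective.mem_set_image

end IsNormalSubloop

/-- For a normal subloop `N` of `L`, the set
`𝓛(N) = { α ∈ Mlt_ℓ(L) : α(x) ∈ N·x for all x }` is a normal subgroup of
`Mlt_ℓ(L)`. -/
theorem stmt2 {L : Type*} (S : LoopStr L) (N : Set L) (hN : IsNormalSubloop S N) :
    ∃ H : Subgroup ↥S.Mlt,
      (∀ α : ↥S.Mlt, α ∈ H ↔ ∀ x : L, ∃ n ∈ N, (α : Equiv.Perm L) x = S.mul n x) ∧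
      H.Normal := by
  refine ⟨hN.rcosetSetoid.classwisePerm.subgroupOf S.Mlt, fun α ↦ ?_, ?_⟩
  · simp only [Subgroup.mem_subgroupOf]
    exact forall_congr' fun x ↦ exists_congr fun n ↦ and_congr_right fun _ ↦ eq_comm
  · exact Subgroup.normal_subgroupOf_of_le_normalizer
      (hN.mlt_le_autPerm.trans hN.rcosetSetoid.autPerm_le_normalizer_classwisePerm)
end

section
/- If the left multiplication group Mlt_ℓ(L) of a loop L is a simple group, then L is a simple loop, i.e., every normal subloop of L is either trivial ({1}) or all of L. -/
/-!
A normal subloop `N` partitions `L` into left cosets `xN`, and the normality identity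
`(ax)N = a(xN)` says that every left translation, hence every element of `Mlt_ℓ(L)`, maps
cosets to cosets. The elements of `Mlt_ℓ(L)` fixing every coset form a normal subgroup `K`.
For `n ∈ N` we have `nx ∈ Nx = xN`, so `λ_n ∈ K`; and `λ_a ∈ K` forces `a = a·1 ∈ 1·N = N`.
Hence `K = 1` gives `N = {1}`, while `K = Mlt_ℓ(L)` gives `N = L`.
-/

namespace LoopStr

variable {L : Type*} (S : LoopStr L)

@[simp]
lemma lam_apply (x y : L) : S.lam x y = S.mul x y := rfl

lemma lam_mem_Mlt (x : L) : S.lam x ∈ S.Mlt :=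
  Subgroup.subset_closure ⟨x, rfl⟩

lemma eq_one_of_lam_eq_one {a : L} (ha : S.lam a = 1) : a = S.one := by
  simpa [S.mul_one] using DFunLike.congr_fun ha S.one

def cosetKernel (N : Set L) : Subgroup S.Mlt where
  carrier := {g | ∀ x, S.mul ((g : Equiv.Perm L) x) '' N = S.mul x '' N}
  one_mem' _ := rfl
  mul_mem' {g₁ g₂} h₁ h₂ x := (h₁ _).trans (h₂ x)
  inv_mem' {g} hg x := by
    simpa using (hg ((g : Equiv.Perm L)⁻¹ x)).symm

lemma mem_of_lam_mem_cosetKernel {N : Set L} (hone : S.one ∈ N) {a : L}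
    (ha : ⟨S.lam a, S.lam_mem_Mlt a⟩ ∈ S.cosetKernel N) : a ∈ N := by
  have hcoset : S.mul a '' N = N := by
    simpa [S.mul_one, S.one_mul] using ha S.one
  exact hcoset ▸ ⟨S.one, hone, S.mul_one a⟩

end LoopStr

namespace IsSubloop

variable {L : Type*} {S : LoopStr L} {N : Set L}

lemma image_mul_left_of_mem (hN : IsSubloop S N) {n : L} (hn : n ∈ N) :
    S.mul n '' N = N := by
  refine Set.Subset.antisymm ?_ fun m hm => ⟨S.ldiv n m, hN.2.2.1 n hn m hm, ?_⟩
  · rintro _ ⟨m, hm, rfl⟩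
    exact hN.2.1 n hn m hm
  · exact (S.lam n).apply_symm_apply m

end IsSubloop

namespace IsNormalSubloop

variable {L : Type*} {S : LoopStr L} {N : Set L}

lemma coset_mul_left (hN : IsNormalSubloop S N) (a x : L) :
    S.mul (S.mul a x) '' N = S.mul a '' (S.mul x '' N) := by
  rw [Set.image_image]
  exact (hN.2 a x).1

lemma left_coset_eq_right_coset (hN : IsNormalSubloop S N) (x : L) :
    S.mul x '' N = (fun n => S.mul n x) '' N := by
  simpa [S.one_mul] using (hN.2 S.one x).2

lemma coset_eq_of_mem (hN : IsNormalSubloop S N) {x y : L} (hy : y ∈ S.mul x '' N) :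
    S.mul y '' N = S.mul x '' N := by
  obtain ⟨n, hn, rfl⟩ := hy
  rw [hN.coset_mul_left, hN.1.image_mul_left_of_mem hn]

lemma coset_apply_of_mem_Mlt (hN : IsNormalSubloop S N) {g : Equiv.Perm L}
    (hg : g ∈ S.Mlt) (x : L) : S.mul (g x) '' N = g '' (S.mul x '' N) := by
  induction hg using Subgroup.closure_induction generalizing x with
  | mem g hg =>
    obtain ⟨a, rfl⟩ := hg
    exact hN.coset_mul_left a x
  | one => simp
  | mul g₁ g₂ _ _ ih₁ ih₂ =>
    rw [Equiv.Perm.coe_mul, Function.comp_apply, ih₁, ih₂, Set.image_image]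
    rfl
  | inv g _ ih =>
    have h := ih (g⁻¹ x)
    rw [Equiv.Perm.inv_def, Equiv.apply_symm_apply] at h
    rw [h, Equiv.Perm.inv_def, Equiv.symm_image_image]

lemma cosetKernel_normal (hN : IsNormalSubloop S N) : (S.cosetKernel N).Normal where
  conj_mem g hg k x := by
    simp only [Subgroup.coe_mul, Equiv.Perm.coe_mul, Function.comp_apply,
      Subgroup.coe_inv]
    rw [hN.coset_apply_of_mem_Mlt k.2, hg, ← hN.coset_apply_of_mem_Mlt k.2,
      Equiv.Perm.inv_def, Equiv.apply_symm_apply]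

lemma lam_mem_cosetKernel (hN : IsNormalSubloop S N) {n : L} (hn : n ∈ N) :
    ⟨S.lam n, S.lam_mem_Mlt n⟩ ∈ S.cosetKernel N := fun x => by
  refine hN.coset_eq_of_mem ?_
  rw [hN.left_coset_eq_right_coset]
  exact ⟨n, hn, rfl⟩

end IsNormalSubloop

/-- If the left multiplication group of a loop `L` is a simple
group, then `L` is a simple loop. -/
theorem stmt5 {L : Type*} (S : LoopStr L) (h : IsSimpleGroup ↥S.Mlt) :
    ∀ N : Set L, IsNormalSubloop S N → N = {S.one} ∨ N = Set.univ := by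
  intro N hN
  rcases h.eq_bot_or_eq_top_of_normal _ hN.cosetKernel_normal with hbot | htop
  · refine Or.inl (Set.Subset.antisymm (fun n hn => ?_) (Set.singleton_subset_iff.2 hN.1.1))
    have hK := hN.lam_mem_cosetKernel hn
    rw [hbot, Subgroup.mem_bot, Subtype.ext_iff] at hK
    exact S.eq_one_of_lam_eq_one hK
  · refine Or.inr (Set.eq_univ_of_forall fun a => S.mem_of_lam_mem_cosetKernel hN.1.1 ?_)
    rw [htop]
    exact Subgroup.mem_top _
end

section
/- Every left Bol loop satisfying the automorphic inverse property is a K-loop; in particular, in such a loop the maps δ_{x,y} = λ_{xy}⁻¹λ_xλ_y are automorphisms of the loop. -/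
/-- Every left Bol loop with the automorphic inverse property
is a K-loop: the inner mappings `δ_{x,y} = λ_{xy}⁻¹λ_xλ_y` are automorphisms
of the loop. -/
theorem stmt8 {L : Type*} (S : LoopStr L) (inv : L → L)
    (hinv_right : ∀ x, S.mul x (inv x) = S.one)
    (hinv_left : ∀ x, S.mul (inv x) x = S.one)
    (bol : ∀ x y z, S.mul x (S.mul y (S.mul x z)) = S.mul (S.mul x (S.mul y x)) z)
    (aip : ∀ x y, inv (S.mul x y) = S.mul (inv x) (inv y)) :
    ∀ x y a b : L,
      (S.delta x y) (S.mul a b) = S.mul ((S.delta x y) a) ((S.delta x y) b) := by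
  -- basic cancellation
  have cancelL : ∀ p : L, ∀ {q r : L}, S.mul p q = S.mul p r → q = r :=
    fun p _ _ h => (S.mul_left_bij p).1 h
  have cancelR : ∀ p : L, ∀ {q r : L}, S.mul q p = S.mul r p → q = r :=
    fun p _ _ h => (S.mul_right_bij p).1 h
  -- left inverse property
  have lip : ∀ p z, S.mul (inv p) (S.mul p z) = z := by
    intro p z
    apply cancelL p
    rw [bol, hinv_left, S.mul_one]
  have inv_inv : ∀ p, inv (inv p) = p := by
    intro p
    apply cancelL (inv p)
    rw [hinv_right, hinv_left]
  have lip' : ∀ p z, S.mul p (S.mul (inv p) z) = z := by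
    intro p z
    have h := lip (inv p) z
    rwa [inv_inv] at h
  -- left alternative law
  have sq : ∀ p z, S.mul p (S.mul p z) = S.mul (S.mul p p) z := by
    intro p z
    have h := bol p S.one z
    rwa [S.one_mul, S.one_mul] at h
  -- the Bruck identity (key lemma): (pq)(pq) = p((qq)p)
  have K : ∀ p q, S.mul (S.mul p q) (S.mul p q) = S.mul p (S.mul (S.mul q q) p) := by
    intro p q
    apply cancelR (inv (S.mul p q))
    have h1 : S.mul (S.mul (S.mul p q) (S.mul p q)) (inv (S.mul p q)) = S.mul p q := by
      rw [← sq, hinv_right, S.mul_one]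
    have h2 : S.mul (S.mul p (S.mul (S.mul q q) p)) (inv (S.mul p q)) = S.mul p q := by
      rw [← bol, aip, lip', ← sq, hinv_right, S.mul_one]
    rw [h1, h2]
  -- translating the permutation language into elements
  have symm_apply : ∀ p c, (S.lam p).symm c = S.mul (inv p) c := by
    intro p c
    rw [Equiv.symm_apply_eq]
    show c = S.mul p (S.mul (inv p) c)
    exact (lip' p c).symm
  have delta_apply : ∀ x y c : L,
      (S.delta x y) c = S.mul (inv (S.mul x y)) (S.mul x (S.mul y c)) := by
    intro x y c
    show ((S.lam (S.mul x y))⁻¹ * S.lam x * S.lam y) c = _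
    rw [Equiv.Perm.mul_apply, Equiv.Perm.mul_apply, Equiv.Perm.inv_def, symm_apply]
    rfl
  intro x y a b
  -- p := x((y(ay))x) acts by s ↦ x(y(a(y(xs))))
  have p_apply : ∀ s, S.mul (S.mul x (S.mul (S.mul y (S.mul a y)) x)) s
      = S.mul x (S.mul y (S.mul a (S.mul y (S.mul x s)))) := by
    intro s
    rw [← bol, ← bol]
  -- p · (xy)⁻¹ = x(ya)
  have pu : S.mul (S.mul x (S.mul (S.mul y (S.mul a y)) x)) (inv (S.mul x y))
      = S.mul x (S.mul y a) := by
    rw [p_apply, aip, lip', hinv_right, S.mul_one]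
  -- (xy)((xy)(x⁻¹(y⁻¹ b))) = x(yb), using the Bruck identity
  have W : S.mul (S.mul x y) (S.mul (S.mul x y) (S.mul (inv x) (S.mul (inv y) b)))
      = S.mul x (S.mul y b) := by
    rw [sq, K, ← bol, lip', ← sq, lip']
  have S1 : S.mul (inv (S.mul x y)) (S.mul (inv (S.mul x y)) (S.mul x (S.mul y b)))
      = S.mul (inv x) (S.mul (inv y) b) := by
    rw [← W, lip, lip]
  rw [delta_apply, delta_apply, delta_apply, ← pu,
    ← bol (inv (S.mul x y)) (S.mul x (S.mul (S.mul y (S.mul a y)) x))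
      (S.mul (inv (S.mul x y)) (S.mul x (S.mul y b))),
    S1, p_apply, lip', lip']
end

section
/- Let L_G be the set of positive definite hermitian complex n×n matrices of determinant 1, and Ω = SU(n). Define A ∘ B ∈ L_G and d_{A,B} ∈ Ω by the unique decomposition AB = (A ∘ B)·d_{A,B}. Then (L_G, ∘) with identity I_n is a left Bol loop: A ∘ (B ∘ (A ∘ C)) = (A ∘ (B ∘ A)) ∘ C for all A, B, C ∈ L_G. -/
open scoped ComplexOrder

/-- The set of positive definite hermitian complex `n × n` matrices of
determinant 1. -/
def LG (n : ℕ) : Set (Matrix (Fin n) (Fin n) ℂ) :=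
  {A | A.PosDef ∧ A.det = 1}

/-- The special unitary group `SU(n)`, as a set of matrices. -/
def SU (n : ℕ) : Set (Matrix (Fin n) (Fin n) ℂ) :=
  {u | u ∈ Matrix.unitaryGroup (Fin n) ℂ ∧ u.det = 1}

/-!
Since `AB = (A ∘ B) d` with `d` unitary, `(A ∘ B)² = (AB)(AB)* = A B² A`, so `A ∘ B` is the
unique positive square root of `A B² A`. Both sides of the Bol identity therefore have square
`ABA C² ABA`: on the left directly, on the right because `A ∘ (B ∘ A)` is the positive root
`ABA` of `A (B A² B) A`.
-/

lemma IsSelfAdjoint.sq_eq_of_mul_eq_mul_unitary {R : Type*} [Monoid R] [StarMul R]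
    {a b p u : R} (ha : IsSelfAdjoint a) (hb : IsSelfAdjoint b) (hp : IsSelfAdjoint p)
    (hu : u ∈ unitary R) (h : a * b = p * u) :
    p ^ 2 = a * b ^ 2 * a := by
  have hab : (a * b) * star (a * b) = a * b ^ 2 * a := by
    rw [star_mul, ha.star_eq, hb.star_eq, sq]; simp only [mul_assoc]
  have hpu : (p * u) * star (p * u) = p ^ 2 := by
    rw [star_mul, hp.star_eq, mul_assoc, ← mul_assoc u, Unitary.mul_star_self_of_mem hu, one_mul,
      sq]
  rw [← hpu, ← h, hab]

open scoped MatrixOrder in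
lemma Matrix.PosSemidef.eq_of_sq_eq_sq {m 𝕜 : Type*} [Fintype m] [DecidableEq m] [RCLike 𝕜]
    {A B : Matrix m m 𝕜} (hA : A.PosSemidef) (hB : B.PosSemidef) (h : A ^ 2 = B ^ 2) : A = B :=
  (CFC.sq_eq_sq_iff A B hA.nonneg hB.nonneg).mp h

section PolarProduct

variable {n : ℕ}
  {circ : Matrix (Fin n) (Fin n) ℂ → Matrix (Fin n) (Fin n) ℂ → Matrix (Fin n) (Fin n) ℂ}
  (hcirc : ∀ A ∈ LG n, ∀ B ∈ LG n,
    circ A B ∈ LG n ∧ ∃ u ∈ SU n, A * B = circ A B * u)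
include hcirc

lemma circ_sq {A B : Matrix (Fin n) (Fin n) ℂ} (hA : A ∈ LG n) (hB : B ∈ LG n) :
    circ A B ^ 2 = A * B ^ 2 * A := by
  obtain ⟨hAB, u, ⟨hu, -⟩, hpolar⟩ := hcirc A hA B hB
  exact hA.1.1.isSelfAdjoint.sq_eq_of_mul_eq_mul_unitary hB.1.1.isSelfAdjoint
    hAB.1.1.isSelfAdjoint hu hpolar

lemma circ_eq_of_sq_eq {A B X : Matrix (Fin n) (Fin n) ℂ} (hA : A ∈ LG n) (hB : B ∈ LG n)
    (hX : X.PosSemidef) (h : X ^ 2 = A * B ^ 2 * A) : circ A B = X :=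
  (hcirc A hA B hB).1.1.posSemidef.eq_of_sq_eq_sq hX (by rw [circ_sq hcirc hA hB, h])

end PolarProduct

/-- With `A ∘ B ∈ L_G` defined by the unique polar
decomposition `A·B = (A ∘ B)·d_{A,B}`, `d_{A,B} ∈ SU(n)`, the structure
`(L_G, ∘)` is a left Bol loop with identity `I_n`. -/
theorem stmt10 (n : ℕ)
    (circ : Matrix (Fin n) (Fin n) ℂ → Matrix (Fin n) (Fin n) ℂ → Matrix (Fin n) (Fin n) ℂ)
    (hcirc : ∀ A ∈ LG n, ∀ B ∈ LG n,
      circ A B ∈ LG n ∧ ∃ u ∈ SU n, A * B = circ A B * u) :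
    (∀ A ∈ LG n, circ 1 A = A ∧ circ A 1 = A) ∧
    (∀ A ∈ LG n, ∀ B ∈ LG n, ∀ C ∈ LG n,
      circ A (circ B (circ A C)) = circ (circ A (circ B A)) C) := by
  have one_mem : (1 : Matrix (Fin n) (Fin n) ℂ) ∈ LG n := ⟨.one, Matrix.det_one⟩
  refine ⟨fun A hA => ⟨?_, ?_⟩, fun A hA B hB C hC => ?_⟩
  · exact circ_eq_of_sq_eq hcirc one_mem hA hA.1.posSemidef (by simp)
  · exact circ_eq_of_sq_eq hcirc hA one_mem hA.1.posSemidef (by simp [sq])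
  · have hAC := (hcirc A hA C hC).1
    have hBA := (hcirc B hB A hA).1
    have hABA : circ A (circ B A) = A * B * A := by
      refine circ_eq_of_sq_eq hcirc hA hBA ?_ ?_
      · simpa [hA.1.1.eq, mul_assoc] using hB.1.posSemidef.conjTranspose_mul_mul_same A
      · rw [circ_sq hcirc hB hA]; noncomm_ring
    have hABA_mem := (hcirc A hA _ hBA).1
    refine circ_eq_of_sq_eq hcirc hA (hcirc B hB _ hAC).1 (hcirc _ hABA_mem C hC).1.1.posSemidef ?_
    rw [circ_sq hcirc hABA_mem hC, circ_sq hcirc hB hAC, circ_sq hcirc hA hC, hABA]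
    noncomm_ring
end

section
/- Let F be a field in which every symmetric matrix over F has all eigenvalues in F, with F ordered (e.g., F real closed), n ≥ 2, and let L be the set of positive definite symmetric n×n matrices over F of determinant 1 with Ω = SO(n,F). Then every g ∈ SL(n,F) factors uniquely as g = Aω with A ∈ L, ω ∈ Ω (polar decomposition over F). -/
open Matrix

open Polynomial

section Aux

variable {F : Type*} [Field F] [LinearOrder F] [IsStrictOrderedRing F] {n : ℕ}

lemma mul_self_pos_of_ne_zero' {a : F} (ha : a ≠ 0) : 0 < a * a := by
  rcases lt_or_gt_of_ne ha with h | h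
  · exact mul_pos_of_neg_of_neg h h
  · exact mul_pos h h

lemma aux_dot_pos {v : Fin n → F} (hv : v ≠ 0) : 0 < v ⬝ᵥ v := by
  obtain ⟨i, hi⟩ : ∃ i, v i ≠ 0 := Function.ne_iff.mp hv
  exact Finset.sum_pos' (fun i _ => mul_self_nonneg _)
    ⟨i, Finset.mem_univ i, mul_self_pos_of_ne_zero' hi⟩

lemma aux_sq_zero {B : Matrix (Fin n) (Fin n) F} (hB : Bᵀ = B) (h : B * B = 0) : B = 0 := by
  ext i j
  have h1 : (B * B) i i = ∑ k, B i k * B i k := by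
    rw [Matrix.mul_apply]
    exact Finset.sum_congr rfl fun k _ => by
      rw [show B k i = B i k from by conv_lhs => rw [← hB, Matrix.transpose_apply]]
  have h2 : ∑ k, B i k * B i k = 0 := by rw [← h1, h]; rfl
  have h3 := (Finset.sum_eq_zero_iff_of_nonneg (fun k _ => mul_self_nonneg (B i k))).mp h2
  simpa [mul_self_eq_zero] using h3 j (Finset.mem_univ j)

lemma aux_nilpotent_zero (hn : 2 ≤ n) {B : Matrix (Fin n) (Fin n) F} (hB : Bᵀ = B) :
    ∀ k, B ^ k = 0 → B = 0 := by
  have : NeZero n := ⟨by omega⟩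
  intro k
  induction k using Nat.strong_induction_on with
  | _ k ih =>
    intro hk
    match k, hk with
    | 0, hk => exact absurd hk (by simp)
    | 1, hk => simpa using hk
    | (m+2), hk =>
      have hsq : B ^ (m+1) * B ^ (m+1) = 0 := by
        have : B ^ (m+1) * B ^ (m+1) = B ^ (m+2) * B ^ m := by
          rw [← pow_add, ← pow_add]; ring_nf
        rw [this, hk, zero_mul]
      have hsym : (B ^ (m+1))ᵀ = B ^ (m+1) := by rw [Matrix.transpose_pow, hB]
      exact ih (m+1) (by omega) (aux_sq_zero hsym hsq)

lemma aux_charpoly_eval (B : Matrix (Fin n) (Fin n) F) (lam : F) :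
    (Matrix.charpoly B).eval lam = (lam • (1 : Matrix (Fin n) (Fin n) F) - B).det := by
  rw [Matrix.charpoly, ← Polynomial.coe_evalRingHom, RingHom.map_det]
  congr 1
  ext i j
  by_cases h : i = j
  · subst h
    simp [Matrix.charmatrix_apply_eq, Matrix.one_apply, Matrix.smul_apply]
  · simp [Matrix.charmatrix_apply_ne _ _ _ h, Matrix.one_apply, h, Matrix.smul_apply]

lemma aux_eigen_exists {B : Matrix (Fin n) (Fin n) F} {lam : F}
    (h : (Matrix.charpoly B).IsRoot lam) : ∃ v ≠ 0, B *ᵥ v = lam • v := by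
  classical
  have hdet : (lam • (1 : Matrix (Fin n) (Fin n) F) - B).det = 0 := by
    rw [← aux_charpoly_eval]; exact h
  obtain ⟨v, hv, hmul⟩ := (Matrix.exists_mulVec_eq_zero_iff).mpr hdet
  refine ⟨v, hv, ?_⟩
  rw [Matrix.sub_mulVec, sub_eq_zero] at hmul
  rw [← hmul, Matrix.smul_mulVec, Matrix.one_mulVec]

lemma aux_aeval_mulVec {B : Matrix (Fin n) (Fin n) F} {lam : F} {v : Fin n → F}
    (h : B *ᵥ v = lam • v) (p : F[X]) :
    (Polynomial.aeval B p) *ᵥ v = p.eval lam • v := by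
  induction p using Polynomial.induction_on' with
  | add p q hp hq => rw [map_add, Matrix.add_mulVec, hp, hq, eval_add, add_smul]
  | monomial k a =>
    rw [Polynomial.aeval_monomial, Algebra.algebraMap_eq_smul_one, smul_one_mul,
      Matrix.smul_mulVec, eval_monomial]
    have hpow : ∀ m : ℕ, (B ^ m) *ᵥ v = lam ^ m • v := by
      intro m
      induction m with
      | zero => simp
      | succ m ihm =>
        rw [pow_succ, pow_succ, ← Matrix.mulVec_mulVec, h, Matrix.mulVec_smul, ihm,
          smul_smul, mul_comm]
    rw [hpow, smul_smul]

lemma aux_aeval_transpose {B : Matrix (Fin n) (Fin n) F} (hB : Bᵀ = B) (p : F[X]) :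
    (Polynomial.aeval B p)ᵀ = Polynomial.aeval B p := by
  induction p using Polynomial.induction_on' with
  | add p q hp hq => rw [map_add, Matrix.transpose_add, hp, hq]
  | monomial k a =>
    rw [Polynomial.aeval_monomial, Algebra.algebraMap_eq_smul_one]
    rw [smul_one_mul, Matrix.transpose_smul, Matrix.transpose_pow, hB]

lemma aux_annihilate [DecidableEq F] (hn : 2 ≤ n) {B : Matrix (Fin n) (Fin n) F} (hB : Bᵀ = B)
    (hsp : (Matrix.charpoly B).Splits) :
    Polynomial.aeval B (∏ lam ∈ (Matrix.charpoly B).roots.toFinset, (X - C lam)) = 0 := by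
  set R := (Matrix.charpoly B).roots with hR
  set M := ∏ lam ∈ R.toFinset, (X - C lam) with hM
  have hcard : R.card = n := by
    rw [hR, (Polynomial.splits_iff_card_roots).mp hsp, Matrix.charpoly_natDegree_eq_dim]
    simp
  have hchar : Matrix.charpoly B = ∏ lam ∈ R.toFinset, (X - C lam) ^ R.count lam := by
    conv_lhs => rw [hsp.eq_prod_roots_of_monic (Matrix.charpoly_monic B)]
    rw [← hR]
    exact Finset.prod_multiset_map_count R _
  have hdvd : Matrix.charpoly B ∣ M ^ n := by
    rw [hchar, hM, ← Finset.prod_pow]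
    apply Finset.prod_dvd_prod_of_dvd
    intro lam _
    exact pow_dvd_pow _ (le_trans (Multiset.count_le_card lam R) (le_of_eq hcard))
  obtain ⟨q, hq⟩ := hdvd
  have hnil : (Polynomial.aeval B M) ^ n = 0 := by
    rw [← map_pow, hq, _root_.map_mul, Matrix.aeval_self_charpoly, zero_mul]
  exact aux_nilpotent_zero hn (aux_aeval_transpose hB M) n hnil

lemma aux_basis_mul [DecidableEq F] {s : Finset F} {lam : F} (hlam : lam ∈ s) :
    (X - C lam) * Lagrange.basis s id lam =
      C (∏ mu ∈ s.erase lam, (lam - mu)⁻¹) * ∏ mu ∈ s, (X - C mu) := by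
  rw [Lagrange.basis]
  have h1 : ∀ mu ∈ s.erase lam, Lagrange.basisDivisor (id lam) (id mu)
      = C (lam - mu)⁻¹ * (X - C mu) := fun mu _ => rfl
  rw [Finset.prod_congr rfl h1, Finset.prod_mul_distrib, ← map_prod]
  rw [← Finset.mul_prod_erase s _ hlam]
  ring

lemma aux_eigenvalue_pos {B : Matrix (Fin n) (Fin n) F}
    (hpd : ∀ x : Fin n → F, x ≠ 0 → 0 < x ⬝ᵥ (B *ᵥ x)) {lam : F}
    (h : (Matrix.charpoly B).IsRoot lam) : 0 < lam := by
  obtain ⟨v, hv, heig⟩ := aux_eigen_exists h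
  have h1 : 0 < v ⬝ᵥ (B *ᵥ v) := hpd v hv
  rw [heig, dotProduct_smul, smul_eq_mul] at h1
  have h2 : 0 < v ⬝ᵥ v := aux_dot_pos hv
  nlinarith

lemma aux_det_pos {B : Matrix (Fin n) (Fin n) F}
    (hpd : ∀ x : Fin n → F, x ≠ 0 → 0 < x ⬝ᵥ (B *ᵥ x))
    (hsp : (Matrix.charpoly B).Splits) : 0 < B.det := by
  rw [Matrix.det_eq_prod_roots_charpoly_of_splits hsp]
  exact Multiset.prod_pos fun lam hlam =>
    aux_eigenvalue_pos hpd ((Polynomial.mem_roots (Matrix.charpoly_monic B).ne_zero).mp hlam)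

lemma aux_sqrt_two (hn : 2 ≤ n)
    (hreal : ∀ A : Matrix (Fin n) (Fin n) F, Aᵀ = A →
      (Matrix.charpoly A).Splits)
    (u v : F) : ∃ w : F, 0 ≤ w ∧ w ^ 2 = u ^ 2 + v ^ 2 := by
  classical
  by_cases huv : u = 0 ∧ v = 0
  · exact ⟨0, le_refl 0, by rw [huv.1, huv.2]; ring⟩
  have : NeZero n := ⟨by omega⟩
  set i0 : Fin n := ⟨0, by omega⟩
  set i1 : Fin n := ⟨1, by omega⟩
  have h01 : i0 ≠ i1 := by simp [i0, i1, Fin.ext_iff]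
  set C : Matrix (Fin n) (Fin n) F := Matrix.of fun i j =>
    if i = i0 ∧ j = i0 then u else if i = i0 ∧ j = i1 then v
    else if i = i1 ∧ j = i0 then v else if i = i1 ∧ j = i1 then -u else 0 with hC
  have hCsym : Cᵀ = C := by
    ext i j
    simp only [Matrix.transpose_apply, hC, Matrix.of_apply]
    by_cases h1 : i = i0 <;> by_cases h2 : j = i0 <;> by_cases h3 : i = i1 <;>
      by_cases h4 : j = i1 <;> simp_all
  have hCij : ∀ w : Fin n → F, C *ᵥ w = fun i =>
      if i = i0 then u * w i0 + v * w i1 else if i = i1 then v * w i0 - u * w i1 else 0 := by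
    intro w
    funext i
    show ∑ k, C i k * w k = _
    have e1 : ∑ k, C i k * w k = C i i0 * w i0 + ∑ k ∈ Finset.univ.erase i0, C i k * w k :=
      (Finset.add_sum_erase _ _ (Finset.mem_univ i0)).symm
    have hmem : i1 ∈ Finset.univ.erase i0 := Finset.mem_erase.mpr ⟨h01.symm, Finset.mem_univ i1⟩
    have e2 : ∑ k ∈ Finset.univ.erase i0, C i k * w k
        = C i i1 * w i1 + ∑ k ∈ (Finset.univ.erase i0).erase i1, C i k * w k :=
      (Finset.add_sum_erase _ _ hmem).symm
    have e3 : ∑ k ∈ (Finset.univ.erase i0).erase i1, C i k * w k = 0 := by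
      apply Finset.sum_eq_zero
      intro k hk
      have hk1 : k ≠ i1 := (Finset.mem_erase.mp hk).1
      have hk0 : k ≠ i0 := (Finset.mem_erase.mp (Finset.mem_erase.mp hk).2).1
      simp [hC, hk0, hk1]
    rw [e1, e2, e3]
    by_cases h1 : i = i0
    · subst h1
      have c00 : C i0 i0 = u := by simp [hC]
      have c01 : C i0 i1 = v := by simp [hC, h01, Ne.symm h01]
      rw [if_pos rfl, c00, c01]; ring
    · by_cases h2 : i = i1
      · subst h2
        have c10 : C i1 i0 = v := by simp [hC, h01, Ne.symm h01]
        have c11 : C i1 i1 = -u := by simp [hC, h01, Ne.symm h01]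
        rw [if_neg h1, if_pos rfl, c10, c11]; ring
      · have c0 : C i i0 = 0 := by simp [hC, h1, h2]
        have c1 : C i i1 = 0 := by simp [hC, h1, h2]
        rw [if_neg h1, if_neg h2, c0, c1]; ring
  have hsp := hreal C hCsym
  have hCnz : C ≠ 0 := by
    intro h0
    rcases not_and_or.mp huv with hu | hv
    · have : C i0 i0 = u := by simp [hC]
      rw [h0] at this
      exact hu (by simpa using this.symm)
    · have : C i0 i1 = v := by simp [hC, h01, Ne.symm h01]
      rw [h0] at this
      exact hv (by simpa using this.symm)
  have hcard : Multiset.card (Matrix.charpoly C).roots = n := by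
    rw [(Polynomial.splits_iff_card_roots).mp hsp, Matrix.charpoly_natDegree_eq_dim]
    simp
  obtain ⟨lam, hlamroot, hlamne⟩ : ∃ lam ∈ (Matrix.charpoly C).roots, lam ≠ 0 := by
    by_contra hall
    push_neg at hall
    have hch : Matrix.charpoly C = X ^ n := by
      rw [hsp.eq_prod_roots_of_monic (Matrix.charpoly_monic C)]
      have heq : (Matrix.charpoly C).roots.map (fun a => X - Polynomial.C a)
          = (Matrix.charpoly C).roots.map (fun _ => (X : F[X])) :=
        Multiset.map_congr rfl fun a ha => by rw [hall a ha, map_zero, sub_zero]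
      rw [heq, Multiset.map_const', Multiset.prod_replicate, hcard]
    have hCn : C ^ n = 0 := by
      have := Matrix.aeval_self_charpoly C
      rwa [hch, map_pow, Polynomial.aeval_X] at this
    exact hCnz (aux_nilpotent_zero hn hCsym n hCn)
  obtain ⟨w, hwne, hweig⟩ := aux_eigen_exists
    ((Polynomial.mem_roots (Matrix.charpoly_monic C).ne_zero).mp hlamroot)
  rw [hCij w] at hweig
  have hw0 : u * w i0 + v * w i1 = lam * w i0 := by
    have := congrFun hweig i0
    simpa using this
  have hw1 : v * w i0 - u * w i1 = lam * w i1 := by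
    have := congrFun hweig i1
    simpa [h01, Ne.symm h01] using this
  have key : lam ^ 2 = u ^ 2 + v ^ 2 := by
    obtain ⟨j, hj⟩ : ∃ j, w j ≠ 0 := Function.ne_iff.mp hwne
    have hj01 : j = i0 ∨ j = i1 := by
      by_contra hno
      push_neg at hno
      have := congrFun hweig j
      simp only [hno.1, hno.2, if_false, Pi.smul_apply, smul_eq_mul] at this
      exact hj (by
        have := this.symm
        rcases mul_eq_zero.mp this with h | h
        · exact absurd h hlamne
        · exact h)
    rcases hj01 with hj0 | hj1
    · have hj' : w i0 ≠ 0 := hj0 ▸ hj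
      refine mul_right_cancel₀ hj' ?_
      calc lam ^ 2 * w i0 = lam * (lam * w i0) := by ring
        _ = lam * (u * w i0 + v * w i1) := by rw [hw0]
        _ = u * (lam * w i0) + v * (lam * w i1) := by ring
        _ = u * (u * w i0 + v * w i1) + v * (v * w i0 - u * w i1) := by rw [hw0, hw1]
        _ = (u ^ 2 + v ^ 2) * w i0 := by ring
    · have hj' : w i1 ≠ 0 := hj1 ▸ hj
      refine mul_right_cancel₀ hj' ?_
      calc lam ^ 2 * w i1 = lam * (lam * w i1) := by ring
        _ = lam * (v * w i0 - u * w i1) := by rw [hw1]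
        _ = v * (lam * w i0) - u * (lam * w i1) := by ring
        _ = v * (u * w i0 + v * w i1) - u * (v * w i0 - u * w i1) := by rw [hw0, hw1]
        _ = (u ^ 2 + v ^ 2) * w i1 := by ring
  exact ⟨|lam|, abs_nonneg lam, by rw [sq_abs, key]⟩

lemma aux_mulVec_ext {A B : Matrix (Fin n) (Fin n) F}
    (h : ∀ v, A *ᵥ v = B *ᵥ v) : A = B := by
  classical
  ext i j
  have := congrFun (h (Pi.single j 1)) i
  rw [Matrix.mulVec_single, Matrix.mulVec_single] at this
  simpa using this

lemma aux_mulVec_sum {ι : Type*} (A : Matrix (Fin n) (Fin n) F) (s : Finset ι)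
    (f : ι → (Fin n → F)) : A *ᵥ (∑ i ∈ s, f i) = ∑ i ∈ s, A *ᵥ f i := by
  classical
  induction s using Finset.induction with
  | empty => simp
  | insert _ _ hx ih => rw [Finset.sum_insert hx, Finset.sum_insert hx, Matrix.mulVec_add, ih]

lemma aux_dot_sum {ι : Type*} (v : Fin n → F) (s : Finset ι) (f : ι → (Fin n → F)) :
    v ⬝ᵥ (∑ i ∈ s, f i) = ∑ i ∈ s, v ⬝ᵥ f i := by
  classical
  induction s using Finset.induction with
  | empty => simp
  | insert _ _ hx ih => rw [Finset.sum_insert hx, Finset.sum_insert hx, dotProduct_add, ih]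

lemma aux_sum_dot {ι : Type*} (v : Fin n → F) (s : Finset ι) (f : ι → (Fin n → F)) :
    (∑ i ∈ s, f i) ⬝ᵥ v = ∑ i ∈ s, f i ⬝ᵥ v := by
  classical
  induction s using Finset.induction with
  | empty => simp
  | insert _ _ hx ih => rw [Finset.sum_insert hx, Finset.sum_insert hx, add_dotProduct, ih]

lemma aux_dot_nonneg (v : Fin n → F) : 0 ≤ v ⬝ᵥ v :=
  Finset.sum_nonneg fun i _ => mul_self_nonneg (v i)

lemma aux_sum_mulVec_mat {ι : Type*} (s : Finset ι) (f : ι → Matrix (Fin n) (Fin n) F)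
    (x : Fin n → F) : (∑ i ∈ s, f i) *ᵥ x = ∑ i ∈ s, f i *ᵥ x := by
  classical
  induction s using Finset.induction with
  | empty => simp
  | insert _ _ hx ih => rw [Finset.sum_insert hx, Finset.sum_insert hx, Matrix.add_mulVec, ih]

lemma aux_sqrt_dot (hn : 2 ≤ n)
    (hreal : ∀ A : Matrix (Fin n) (Fin n) F, Aᵀ = A →
      (Matrix.charpoly A).Splits)
    (v : Fin n → F) : ∃ w : F, 0 ≤ w ∧ w ^ 2 = v ⬝ᵥ v := by
  classical
  have key : ∀ s : Finset (Fin n), ∃ w : F, 0 ≤ w ∧ w ^ 2 = ∑ i ∈ s, v i * v i := by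
    intro s
    induction s using Finset.induction with
    | empty => exact ⟨0, le_refl 0, by simp⟩
    | insert a s ha ih =>
      obtain ⟨w, hw0, hw⟩ := ih
      obtain ⟨w', hw'0, hw'⟩ := aux_sqrt_two hn hreal (v a) w
      exact ⟨w', hw'0, by rw [hw', Finset.sum_insert ha, ← hw]; ring⟩
  exact key Finset.univ

end Aux

/-- Polar decomposition over an `n`-real ordered field `F`
(every symmetric matrix over `F` has its characteristic polynomial split over
`F`): every `g ∈ SL(n, F)` factors uniquely as `g = A * ω` with `A` positive
definite symmetric of determinant 1 and `ω ∈ SO(n, F)`. -/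
theorem stmt19 (F : Type*) [Field F] [LinearOrder F] [IsStrictOrderedRing F] (n : ℕ) (hn : 2 ≤ n)
    (hreal : ∀ A : Matrix (Fin n) (Fin n) F, Aᵀ = A →
      (Matrix.charpoly A).Splits)
    (g : Matrix (Fin n) (Fin n) F) (hg : g.det = 1) :
    ∃! p : Matrix (Fin n) (Fin n) F × Matrix (Fin n) (Fin n) F,
      (p.1ᵀ = p.1 ∧
        (∀ x : Fin n → F, x ≠ 0 → 0 < dotProduct x (p.1.mulVec x)) ∧
        p.1.det = 1) ∧
      (p.2ᵀ * p.2 = 1 ∧ p.2.det = 1) ∧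
      g = p.1 * p.2 := by
  classical
  -- the symmetric positive definite matrix S = g gᵀ
  set S : Matrix (Fin n) (Fin n) F := g * gᵀ with hSdef
  have hSsym : Sᵀ = S := by rw [hSdef, Matrix.transpose_mul, Matrix.transpose_transpose]
  have hgtdet : gᵀ.det = 1 := by rw [Matrix.det_transpose, hg]
  have hgtinj : ∀ x : Fin n → F, x ≠ 0 → gᵀ *ᵥ x ≠ 0 := by
    intro x hx h0
    have : gᵀ.det = 0 := Matrix.exists_mulVec_eq_zero_iff.mp ⟨x, hx, h0⟩
    rw [hgtdet] at this
    exact one_ne_zero this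
  have hSvec : ∀ x : Fin n → F, S *ᵥ x = g *ᵥ (gᵀ *ᵥ x) := by
    intro x; rw [hSdef, ← Matrix.mulVec_mulVec]
  have hSdot : ∀ x : Fin n → F, x ⬝ᵥ (S *ᵥ x) = (gᵀ *ᵥ x) ⬝ᵥ (gᵀ *ᵥ x) := by
    intro x
    rw [hSvec, Matrix.dotProduct_mulVec, Matrix.mulVec_transpose]
  have hSpd : ∀ x : Fin n → F, x ≠ 0 → 0 < x ⬝ᵥ (S *ᵥ x) := by
    intro x hx
    rw [hSdot]
    exact aux_dot_pos (hgtinj x hx)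
  have hsp := hreal S hSsym
  have hdetS : S.det = 1 := by rw [hSdef, Matrix.det_mul, hg, hgtdet, one_mul]
  -- spectral data
  set Λ : Finset F := (Matrix.charpoly S).roots.toFinset with hΛdef
  have hvs : Set.InjOn id (Λ : Set F) := Function.injective_id.injOn
  have hcard : Multiset.card (Matrix.charpoly S).roots = n := by
    rw [(Polynomial.splits_iff_card_roots).mp hsp, Matrix.charpoly_natDegree_eq_dim]
    simp
  have hΛne : Λ.Nonempty := by
    rw [hΛdef]
    refine Multiset.toFinset_nonempty.mpr fun h0 => ?_
    rw [h0] at hcard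
    simp at hcard
    omega
  have hroot : ∀ lam ∈ Λ, (Matrix.charpoly S).IsRoot lam := by
    intro lam hlam
    exact (Polynomial.mem_roots (Matrix.charpoly_monic S).ne_zero).mp
      (Multiset.mem_toFinset.mp hlam)
  have hpos : ∀ lam ∈ Λ, 0 < lam := fun lam hlam =>
    aux_eigenvalue_pos hSpd (hroot lam hlam)
  -- projections
  set E : F → Matrix (Fin n) (Fin n) F :=
    fun lam => Polynomial.aeval S (Lagrange.basis Λ id lam) with hEdef
  have hannih := aux_annihilate hn hSsym hsp
  have hmulE : ∀ lam ∈ Λ, S * E lam = lam • E lam := by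
    intro lam hlam
    have h1 : (S - lam • 1) * E lam = 0 := by
      have h2 : (S - lam • 1) * E lam
          = Polynomial.aeval S ((Polynomial.X - Polynomial.C lam) * Lagrange.basis Λ id lam) := by
        rw [_root_.map_mul, map_sub, Polynomial.aeval_X, Polynomial.aeval_C,
          Algebra.algebraMap_eq_smul_one]
      rw [← hΛdef] at hannih
      rw [h2, aux_basis_mul hlam, _root_.map_mul, hannih, mul_zero]
    have h3 := sub_eq_zero.mpr (rfl : E lam = E lam)
    have h4 : S * E lam - (lam • 1) * E lam = 0 := by
      rw [← Matrix.sub_mul, h1]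
    have h5 := sub_eq_zero.mp h4
    rw [h5, Matrix.smul_mul, Matrix.one_mul]
  have heig : ∀ lam ∈ Λ, ∀ x : Fin n → F, S *ᵥ (E lam *ᵥ x) = lam • (E lam *ᵥ x) := by
    intro lam hlam x
    rw [Matrix.mulVec_mulVec, hmulE lam hlam, Matrix.smul_mulVec]
  have hEsym : ∀ lam, (E lam)ᵀ = E lam := fun lam => aux_aeval_transpose hSsym _
  have hsumE : ∑ lam ∈ Λ, E lam = 1 := by
    rw [hEdef, ← map_sum, Lagrange.sum_basis hvs hΛne, _root_.map_one]
  have hdecomp : ∀ x : Fin n → F, ∑ lam ∈ Λ, E lam *ᵥ x = x := by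
    intro x
    rw [← aux_sum_mulVec_mat, hsumE, Matrix.one_mulVec]
  have horth : ∀ lam ∈ Λ, ∀ nu ∈ Λ, lam ≠ nu → ∀ x y : Fin n → F,
      (E lam *ᵥ x) ⬝ᵥ (E nu *ᵥ y) = 0 := by
    intro lam hlam nu hnu hne x y
    set a := E lam *ᵥ x
    set b := E nu *ᵥ y
    have hab : (S *ᵥ a) ⬝ᵥ b = a ⬝ᵥ (S *ᵥ b) := by
      rw [Matrix.dotProduct_mulVec a S b, ← Matrix.mulVec_transpose, hSsym,
        dotProduct_comm, Matrix.dotProduct_mulVec b S a, ← Matrix.mulVec_transpose,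
        hSsym, dotProduct_comm]
    rw [heig lam hlam, heig nu hnu, smul_dotProduct, dotProduct_smul,
      smul_eq_mul, smul_eq_mul] at hab
    have : (lam - nu) * (a ⬝ᵥ b) = 0 := by linarith
    rcases mul_eq_zero.mp this with h | h
    · exact absurd (by linarith : lam = nu) hne
    · exact h
  -- square roots of eigenvalues
  have hmu : ∀ lam ∈ Λ, ∃ mu : F, 0 < mu ∧ mu ^ 2 = lam := by
    intro lam hlam
    obtain ⟨v, hv, heq⟩ := aux_eigen_exists (hroot lam hlam)
    have hr : 0 < v ⬝ᵥ v := aux_dot_pos hv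
    have hlr : lam * (v ⬝ᵥ v) = (gᵀ *ᵥ v) ⬝ᵥ (gᵀ *ᵥ v) := by
      rw [← hSdot v, heq, dotProduct_smul, smul_eq_mul]
    obtain ⟨ws, hws0, hws⟩ := aux_sqrt_dot hn hreal (gᵀ *ᵥ v)
    obtain ⟨wr, hwr0, hwr⟩ := aux_sqrt_dot hn hreal v
    have hwrne : wr ≠ 0 := by
      intro h0
      rw [h0] at hwr
      simp at hwr
      rw [← hwr] at hr
      exact lt_irrefl 0 hr
    have hmusq : (ws / wr) ^ 2 = lam := by
      rw [div_pow, hws, hwr, ← hlr]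
      field_simp
    have hlampos := hpos lam hlam
    have hmune : ws / wr ≠ 0 := by
      intro h0
      rw [h0] at hmusq
      simp at hmusq
      rw [← hmusq] at hlampos
      exact lt_irrefl 0 hlampos
    exact ⟨ws / wr, lt_of_le_of_ne (div_nonneg hws0 hwr0) (Ne.symm hmune), hmusq⟩
  set mu : F → F := fun lam => if h : lam ∈ Λ then (hmu lam h).choose else 1 with hmudef
  have hmupos : ∀ lam ∈ Λ, 0 < mu lam := by
    intro lam h
    rw [hmudef]
    simp only [dif_pos h]
    exact (hmu lam h).choose_spec.1
  have hmusq : ∀ lam ∈ Λ, (mu lam) ^ 2 = lam := by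
    intro lam h
    rw [hmudef]
    simp only [dif_pos h]
    exact (hmu lam h).choose_spec.2
  -- the square root A of S
  set pA : Polynomial F := ∑ lam ∈ Λ, Polynomial.C (mu lam) * Lagrange.basis Λ id lam with hpAdef
  set A : Matrix (Fin n) (Fin n) F := Polynomial.aeval S pA with hAdef
  have hevalp : ∀ nu ∈ Λ, pA.eval nu = mu nu := by
    intro nu hnu
    rw [hpAdef, Polynomial.eval_finset_sum]
    rw [Finset.sum_eq_single_of_mem nu hnu]
    · rw [Polynomial.eval_mul, Polynomial.eval_C]
      have := Lagrange.eval_basis_self hvs hnu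
      simp only [id] at this
      rw [this, mul_one]
    · intro lam hlam hne
      rw [Polynomial.eval_mul, Polynomial.eval_C]
      have := Lagrange.eval_basis_of_ne hne hnu (s := Λ) (v := id)
      simp only [id] at this
      rw [this, mul_zero]
  have hAsym : Aᵀ = A := aux_aeval_transpose hSsym pA
  have hAvec : ∀ lam ∈ Λ, ∀ x : Fin n → F,
      A *ᵥ (E lam *ᵥ x) = mu lam • (E lam *ᵥ x) := by
    intro lam hlam x
    rw [hAdef, aux_aeval_mulVec (heig lam hlam x), hevalp lam hlam]
  have hAx : ∀ x : Fin n → F, A *ᵥ x = ∑ lam ∈ Λ, mu lam • (E lam *ᵥ x) := by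
    intro x
    conv_lhs => rw [← hdecomp x]
    rw [aux_mulVec_sum]
    exact Finset.sum_congr rfl fun lam hlam => hAvec lam hlam x
  have hA2 : A * A = S := by
    apply aux_mulVec_ext
    intro x
    rw [← Matrix.mulVec_mulVec, hAx x, aux_mulVec_sum]
    have h1 : ∀ lam ∈ Λ, A *ᵥ (mu lam • (E lam *ᵥ x)) = lam • (E lam *ᵥ x) := by
      intro lam hlam
      rw [Matrix.mulVec_smul, hAvec lam hlam, smul_smul, ← sq, hmusq lam hlam]
    rw [Finset.sum_congr rfl h1]
    have h2 : ∀ lam ∈ Λ, lam • (E lam *ᵥ x) = S *ᵥ (E lam *ᵥ x) := fun lam hlam =>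
      (heig lam hlam x).symm
    rw [Finset.sum_congr rfl h2, ← aux_mulVec_sum, hdecomp x]
  -- positive definiteness of A
  have hdotE : ∀ x : Fin n → F, ∀ lam ∈ Λ, x ⬝ᵥ (E lam *ᵥ x) = (E lam *ᵥ x) ⬝ᵥ (E lam *ᵥ x) := by
    intro x lam hlam
    have h0 : x ⬝ᵥ (E lam *ᵥ x) = (∑ nu ∈ Λ, E nu *ᵥ x) ⬝ᵥ (E lam *ᵥ x) := by
      rw [hdecomp x]
    rw [h0, aux_sum_dot, Finset.sum_eq_single_of_mem lam hlam]
    intro nu hnu hne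
    exact horth nu hnu lam hlam hne x x
  have hApd : ∀ x : Fin n → F, x ≠ 0 → 0 < x ⬝ᵥ (A *ᵥ x) := by
    intro x hx
    rw [hAx, aux_dot_sum]
    have h1 : ∀ lam ∈ Λ, x ⬝ᵥ (mu lam • (E lam *ᵥ x))
        = mu lam * ((E lam *ᵥ x) ⬝ᵥ (E lam *ᵥ x)) := by
      intro lam hlam
      rw [dotProduct_smul, smul_eq_mul, hdotE x lam hlam]
    rw [Finset.sum_congr rfl h1]
    have h2 : ∃ lam ∈ Λ, E lam *ᵥ x ≠ 0 := by
      by_contra hall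
      push_neg at hall
      have : ∑ lam ∈ Λ, E lam *ᵥ x = 0 := Finset.sum_eq_zero hall
      rw [hdecomp x] at this
      exact hx this
    obtain ⟨lam, hlam, hne⟩ := h2
    refine Finset.sum_pos' (fun nu hnu => mul_nonneg (hmupos nu hnu).le (aux_dot_nonneg _))
      ⟨lam, hlam, mul_pos (hmupos lam hlam) (aux_dot_pos hne)⟩
  -- determinant of A
  have hdetA : A.det = 1 := by
    have h1 : A.det * A.det = 1 := by rw [← Matrix.det_mul, hA2, hdetS]
    have h2 : 0 < A.det := aux_det_pos hApd (hreal A hAsym)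
    rcases mul_self_eq_one_iff.mp h1 with h | h
    · exact h
    · rw [h] at h2; linarith
  have hAunit : IsUnit A.det := by rw [hdetA]; exact isUnit_one
  have hgunit : IsUnit g.det := by rw [hg]; exact isUnit_one
  have hgtunit : IsUnit gᵀ.det := by rw [hgtdet]; exact isUnit_one
  -- the orthogonal part
  set om : Matrix (Fin n) (Fin n) F := A⁻¹ * g with homdef
  have hAom : A * om = g := by
    rw [homdef, ← Matrix.mul_assoc, Matrix.mul_nonsing_inv A hAunit, Matrix.one_mul]
  have homdet : om.det = 1 := by
    rw [homdef, Matrix.det_mul, Matrix.det_nonsing_inv, hdetA, hg, Ring.inverse_one, one_mul]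
  have homorth : omᵀ * om = 1 := by
    have hAinv : A⁻¹ * A⁻¹ = gᵀ⁻¹ * g⁻¹ := by
      rw [← Matrix.mul_inv_rev, hA2, hSdef, Matrix.mul_inv_rev]
    rw [homdef, Matrix.transpose_mul, Matrix.transpose_nonsing_inv, hAsym]
    calc gᵀ * A⁻¹ * (A⁻¹ * g) = gᵀ * (A⁻¹ * A⁻¹) * g := by
          rw [Matrix.mul_assoc, Matrix.mul_assoc, Matrix.mul_assoc]
      _ = gᵀ * (gᵀ⁻¹ * g⁻¹) * g := by rw [hAinv]
      _ = (gᵀ * gᵀ⁻¹) * (g⁻¹ * g) := by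
          rw [Matrix.mul_assoc, Matrix.mul_assoc, Matrix.mul_assoc]
      _ = 1 := by
          rw [Matrix.mul_nonsing_inv gᵀ hgtunit, Matrix.nonsing_inv_mul g hgunit, Matrix.one_mul]
  refine ⟨(A, om), ⟨⟨hAsym, hApd, hdetA⟩, ⟨homorth, homdet⟩, hAom.symm⟩, ?_⟩
  -- uniqueness
  rintro ⟨B, sig⟩ ⟨⟨hBsym, hBpd, hBdet⟩, ⟨hsorth, hsdet⟩, hgBs⟩
  simp only at hBsym hBpd hBdet hsorth hsdet hgBs
  have hBB : B * B = S := by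
    have hss : sig * sigᵀ = 1 := mul_eq_one_comm.mp hsorth
    rw [hSdef, hgBs, Matrix.transpose_mul, hBsym]
    calc B * B = B * 1 * B := by rw [Matrix.mul_one]
      _ = B * (sig * sigᵀ) * B := by rw [hss]
      _ = B * sig * (sigᵀ * B) := by simp only [Matrix.mul_assoc]
  have hBA : B = A := by
    apply aux_mulVec_ext
    intro x
    have hkey : ∀ lam ∈ Λ, B *ᵥ (E lam *ᵥ x) = mu lam • (E lam *ᵥ x) := by
      intro lam hlam
      set w : Fin n → F := E lam *ᵥ x with hwdef
      set c : F := mu lam with hcdef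
      set y : Fin n → F := B *ᵥ w - c • w with hydef
      have hy0 : (B + c • 1) *ᵥ y = 0 := by
        rw [Matrix.add_mulVec, hydef, Matrix.mulVec_sub, Matrix.mulVec_smul,
          Matrix.mulVec_mulVec, hBB, heig lam hlam, Matrix.smul_mulVec,
          Matrix.one_mulVec]
        rw [smul_sub, smul_smul]
        have hcc : c * c = lam := by rw [hcdef, ← sq]; exact hmusq lam hlam
        rw [hcc, hwdef]
        abel
      have hBcpd : ∀ z : Fin n → F, z ≠ 0 → 0 < z ⬝ᵥ ((B + c • 1) *ᵥ z) := by
        intro z hz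
        rw [Matrix.add_mulVec, dotProduct_add, Matrix.smul_mulVec,
          Matrix.one_mulVec, dotProduct_smul, smul_eq_mul]
        have h1 := hBpd z hz
        have h2 := mul_pos (hmupos lam hlam) (aux_dot_pos hz)
        rw [hcdef]
        exact add_pos h1 h2
      have hyzero : y = 0 := by
        by_contra hyne
        have := hBcpd y hyne
        rw [hy0] at this
        simp at this
      rw [hydef] at hyzero
      have := sub_eq_zero.mp hyzero
      rw [hwdef, hcdef] at this
      exact this
    conv_lhs => rw [← hdecomp x]
    rw [aux_mulVec_sum, Finset.sum_congr rfl hkey, ← hAx x]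
  have hsig : sig = om := by
    have h1 : A * sig = A * om := by rw [hAom, ← hBA, ← hgBs]
    have h2 := congrArg (fun M => A⁻¹ * M) h1
    simpa [← Matrix.mul_assoc, Matrix.nonsing_inv_mul A hAunit] using h2
  rw [Prod.ext_iff]
  exact ⟨hBA, hsig⟩
end
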